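/- arXiv:2110.14174 — 2 statements merged into one kernel-verified Lean document; each statement's English description precedes it below -/
import Mathlib

section
/- Let ω₁ = ⋯ = ω_N = ω_s and let Γ₁,...,Γ_N ∈ ℝ, not all zero. There exists an orthogonal real (N+1)×(N+1) matrix T, block diagonal with an N×N orthogonal block T̃₁ and a 1 in the last position, such that Tᵀ A T = diag(-iω_s·I_{N-1}, Â_co), where Â_co = [[-iω_s, -i√N·Γ̄],[-i√N·Γ̄, -iω_r - κ/2]] and Γ̄ = √((1/N)∑Γ_k²). Moreover TᵀB = B and CT = C. -/
/-!
The couplings enter `A` only through the vector `Γ`, and conjugating by `diag(Q, 1)` with `Q`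
real orthogonal replaces `Γ` by `Qᵀ Γ` while fixing the cavity coordinate, hence `B` and `C`.
Taking for the columns of `Q` an orthonormal basis whose last vector is `Γ / ‖Γ‖` turns `Γ` into
`‖Γ‖ e_N`, and `‖Γ‖ = √N · Γ̄`.
-/

open Matrix Complex

/-- The resonant Tavis-Cummings system matrix A (all atomic detunings equal to `ω_s`),
indexed by `Fin N ⊕ Unit`. -/
noncomputable def TCmatA (N : ℕ) (κ ωs ωr : ℝ) (Γ : Fin N → ℝ) :
    Matrix (Fin N ⊕ Unit) (Fin N ⊕ Unit) ℂ :=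
  Matrix.of fun i j =>
    match i, j with
    | Sum.inl a, Sum.inl b => if a = b then -Complex.I * (ωs : ℂ) else 0
    | Sum.inl a, Sum.inr _ => -Complex.I * (Γ a : ℂ)
    | Sum.inr _, Sum.inl b => -Complex.I * (Γ b : ℂ)
    | Sum.inr _, Sum.inr _ => -Complex.I * (ωr : ℂ) - (κ : ℂ) / 2

/-- The input vector B: last entry `-√κ`, others `0`. -/
noncomputable def TCvecB (N : ℕ) (κ : ℝ) : Fin N ⊕ Unit → ℂ :=
  Sum.elim (fun _ => 0) (fun _ => -(Real.sqrt κ : ℂ))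

/-- The canonical form `diag(-iω_s·I_{N-1}, Â_co)` of the resonant Tavis-Cummings model:
the first `N-1` atomic coordinates are decoupled, and the last atomic coordinate couples to
the cavity with the collective strength `√N·Γ̄`. -/
noncomputable def TChatA (N : ℕ) (κ ωs ωr : ℝ) (Γbar : ℝ) :
    Matrix (Fin N ⊕ Unit) (Fin N ⊕ Unit) ℂ :=
  Matrix.of fun i j =>
    match i, j with
    | Sum.inl a, Sum.inl b => if a = b then -Complex.I * (ωs : ℂ) else 0
    | Sum.inl a, Sum.inr _ =>
        if a.val = N - 1 then -Complex.I * ((Real.sqrt N * Γbar : ℝ) : ℂ) else 0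
    | Sum.inr _, Sum.inl b =>
        if b.val = N - 1 then -Complex.I * ((Real.sqrt N * Γbar : ℝ) : ℂ) else 0
    | Sum.inr _, Sum.inr _ => -Complex.I * (ωr : ℂ) - (κ : ℂ) / 2

theorem OrthonormalBasis.exists_repr_eq_single {𝕜 ι E : Type*} [RCLike 𝕜] [Fintype ι]
    [DecidableEq ι] [NormedAddCommGroup E] [InnerProductSpace 𝕜 E] [FiniteDimensional 𝕜 E]
    (card_ι : Module.finrank 𝕜 E = Fintype.card ι) (v : E) (i₀ : ι) :
    ∃ b : OrthonormalBasis ι 𝕜 E, b.repr v = EuclideanSpace.single i₀ (‖v‖ : 𝕜) := by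
  by_cases hv : v = 0
  · obtain ⟨b, -⟩ := (Orthonormal.of_isEmpty (𝕜 := 𝕜) ((∅ : Set ι).domRestrict fun _ => v)
      ).exists_orthonormalBasis_extension_of_card_eq card_ι
    refine ⟨b, ?_⟩
    ext i
    simp [hv, PiLp.single_apply]
  · have hunit : Orthonormal 𝕜 (({i₀} : Set ι).domRestrict fun _ => (‖v‖⁻¹ : 𝕜) • v) := by
      rw [orthonormal_subsingleton_iff]
      intro
      simp [norm_smul, hv]
    obtain ⟨b, hb⟩ := hunit.exists_orthonormalBasis_extension_of_card_eq card_ι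
    have hvb : v = (‖v‖ : 𝕜) • b i₀ := by
      rw [hb i₀ rfl, smul_smul, mul_inv_cancel₀ (by simpa using hv), one_smul]
    refine ⟨b, ?_⟩
    rw [hvb, LinearIsometryEquiv.map_smul, b.repr_self, ← hvb]
    ext i
    simp [PiLp.single_apply, Algebra.smul_def]

theorem Matrix.exists_orthogonal_transpose_mulVec_eq_single {ι : Type*} [Fintype ι]
    [DecidableEq ι] (v : ι → ℝ) (i₀ : ι) :
    ∃ Q : Matrix ι ι ℝ, Qᵀ * Q = 1 ∧ Qᵀ *ᵥ v = Pi.single i₀ √(∑ i, v i ^ 2) := by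
  obtain ⟨b, hb⟩ := OrthonormalBasis.exists_repr_eq_single finrank_euclideanSpace
    (WithLp.toLp 2 v) i₀
  let Q := (EuclideanSpace.basisFun ι ℝ).toBasis.toMatrix b
  refine ⟨Q, ?_, ?_⟩
  · simpa [Matrix.star_eq_conjTranspose] using
      ((EuclideanSpace.basisFun ι ℝ).toMatrix_orthonormalBasis_mem_unitary b).1
  · ext k
    have hbk : inner ℝ (b k) (WithLp.toLp 2 v) = if k = i₀ then √(∑ i, v i ^ 2) else 0 := by
      simpa [b.repr_apply_apply, PiLp.single_apply, EuclideanSpace.norm_eq] using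
        congrArg (· k) hb
    rw [Pi.single_apply, ← hbk]
    simp [Q, mulVec, dotProduct, Module.Basis.toMatrix_apply, PiLp.inner_apply, mul_comm]

theorem Matrix.transpose_map_ofReal_mul_self {ι : Type*} [Fintype ι] [DecidableEq ι]
    {Q : Matrix ι ι ℝ} (hQ : Qᵀ * Q = 1) : (Q.map ofReal)ᵀ * Q.map ofReal = 1 := by
  have h := congrArg (Matrix.map · ofRealHom) hQ
  simp only [Matrix.map_mul, transpose_map] at h
  rwa [Matrix.map_one _ (map_zero ofRealHom) (map_one ofRealHom)] at h

section TavisCummings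

variable {N : ℕ}

noncomputable def TCrotation (Q : Matrix (Fin N) (Fin N) ℝ) :
    Matrix (Fin N ⊕ Unit) (Fin N ⊕ Unit) ℂ :=
  fromBlocks (Q.map ofReal) 0 0 1

theorem TCrotation_transpose_mul_self {Q : Matrix (Fin N) (Fin N) ℝ} (hQ : Qᵀ * Q = 1) :
    (TCrotation Q)ᵀ * TCrotation Q = 1 := by
  simp [TCrotation, fromBlocks_transpose, fromBlocks_multiply, transpose_map_ofReal_mul_self hQ]

theorem TCmatA_eq_fromBlocks (κ ωs ωr : ℝ) (Γ : Fin N → ℝ) :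
    TCmatA N κ ωs ωr Γ = fromBlocks ((-I * ωs) • 1) (replicateCol Unit (-I • ofReal ∘ Γ))
      (replicateRow Unit (-I • ofReal ∘ Γ)) (of fun _ _ => -I * ωr - κ / 2) := by
  ext (a | u) (b | u') <;> simp [TCmatA, one_apply, neg_ite]

theorem TCrotation_conj_TCmatA {Q : Matrix (Fin N) (Fin N) ℝ} (hQ : Qᵀ * Q = 1)
    (κ ωs ωr : ℝ) (Γ : Fin N → ℝ) :
    (TCrotation Q)ᵀ * TCmatA N κ ωs ωr Γ * TCrotation Q = TCmatA N κ ωs ωr (Qᵀ *ᵥ Γ) := by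
  simp only [TCmatA_eq_fromBlocks, TCrotation, fromBlocks_transpose, fromBlocks_multiply,
    fromBlocks_inj]
  refine ⟨by simp [transpose_map_ofReal_mul_self hQ], ?_, ?_, by simp⟩ <;> ext <;>
    simp [Matrix.mul_apply, mulVec, dotProduct, Finset.mul_sum] <;>
    exact Finset.sum_congr rfl fun _ _ => by ring

theorem TCrotation_transpose_mulVec_TCvecB (Q : Matrix (Fin N) (Fin N) ℝ) (κ : ℝ) :
    (TCrotation Q)ᵀ *ᵥ TCvecB N κ = TCvecB N κ := by
  ext (a | u) <;> simp [TCrotation, TCvecB, mulVec, dotProduct]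

theorem neg_TCvecB_vecMul_TCrotation (Q : Matrix (Fin N) (Fin N) ℝ) (κ : ℝ) :
    (-TCvecB N κ) ᵥ* TCrotation Q = -TCvecB N κ := by
  ext (a | u) <;> simp [TCrotation, TCvecB, vecMul, dotProduct]

theorem TChatA_eq_TCmatA_single {i : Fin N} (hi : i.val = N - 1) (κ ωs ωr Γbar : ℝ) :
    TChatA N κ ωs ωr Γbar = TCmatA N κ ωs ωr (Pi.single i (√N * Γbar)) := by
  have hi' : ∀ a : Fin N, a.val = N - 1 ↔ a = i := fun a => by rw [← hi, Fin.val_inj]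
  ext (a | u) (b | u') <;> simp [TChatA, TCmatA, hi', Pi.single_apply] <;>
    split_ifs <;> simp

end TavisCummings

theorem stmt_8_general (N : ℕ) (hN : 2 ≤ N) (κ : ℝ) (ωs ωr : ℝ)
    (Γ : Fin N → ℝ) :
    ∃ T : Matrix (Fin N ⊕ Unit) (Fin N ⊕ Unit) ℂ,
      (∀ i j, (T i j).im = 0) ∧
      Tᵀ * T = 1 ∧
      (∀ (j : Fin N) (u : Unit), T (Sum.inl j) (Sum.inr u) = 0) ∧
      (∀ (u : Unit) (j : Fin N), T (Sum.inr u) (Sum.inl j) = 0) ∧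
      (∀ u u' : Unit, T (Sum.inr u) (Sum.inr u') = 1) ∧
      Tᵀ * TCmatA N κ ωs ωr Γ * T
        = TChatA N κ ωs ωr (Real.sqrt ((1 / N) * ∑ k, Γ k ^ 2)) ∧
      Tᵀ.mulVec (TCvecB N κ) = TCvecB N κ ∧
      Matrix.vecMul (fun i => -(TCvecB N κ i)) T = (fun i => -(TCvecB N κ i)) := by
  let last : Fin N := ⟨N - 1, by omega⟩
  obtain ⟨Q, hQ, hQΓ⟩ := exists_orthogonal_transpose_mulVec_eq_single Γ last
  have hnorm : √N * √((1 / N) * ∑ k, Γ k ^ 2) = √(∑ k, Γ k ^ 2) := by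
    rw [← Real.sqrt_mul (Nat.cast_nonneg N)]
    field_simp
  refine ⟨TCrotation Q, ?_, TCrotation_transpose_mul_self hQ, fun _ _ => rfl, fun _ _ => rfl,
    fun _ _ => rfl, ?_, TCrotation_transpose_mulVec_TCvecB Q κ, neg_TCvecB_vecMul_TCrotation Q κ⟩
  · rintro (a | u) (b | u') <;> simp [TCrotation, one_apply]
  · rw [TCrotation_conj_TCmatA hQ, hQΓ, TChatA_eq_TCmatA_single (i := last) rfl, hnorm]

/-- Structural decomposition of the resonant Tavis-Cummings model: there is a real orthogonal
transformation `T`, block diagonal with an `N×N` block and a `1` on the cavity coordinate, with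
`Tᵀ A T = diag(-iω_s·I_{N-1}, Â_co)`, `Tᵀ B = B` and `C T = C`. -/
theorem stmt_8 (N : ℕ) (hN : 2 ≤ N) (κ : ℝ) (hκ : 0 < κ) (ωs ωr : ℝ)
    (Γ : Fin N → ℝ) (hΓ : Γ ≠ 0) :
    ∃ T : Matrix (Fin N ⊕ Unit) (Fin N ⊕ Unit) ℂ,
      (∀ i j, (T i j).im = 0) ∧
      Tᵀ * T = 1 ∧
      (∀ (j : Fin N) (u : Unit), T (Sum.inl j) (Sum.inr u) = 0) ∧
      (∀ (u : Unit) (j : Fin N), T (Sum.inr u) (Sum.inl j) = 0) ∧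
      (∀ u u' : Unit, T (Sum.inr u) (Sum.inr u') = 1) ∧
      Tᵀ * TCmatA N κ ωs ωr Γ * T
        = TChatA N κ ωs ωr (Real.sqrt ((1 / N) * ∑ k, Γ k ^ 2)) ∧
      Tᵀ.mulVec (TCvecB N κ) = TCvecB N κ ∧
      Matrix.vecMul (fun i => -(TCvecB N κ i)) T = (fun i => -(TCvecB N κ i)) :=
  stmt_8_general N hN κ ωs ωr Γ
end

section
/- Suppose ω₁ = ⋯ = ω_N = ω_s, and suppose x = (x₁,...,x_N, 0) ∈ ℂ^{N+1} satisfies ∑_{k=1}^N Γ_k x_k = 0. Then x is an eigenvector of A with eigenvalue -iω_s, Cx = 0, and x†B = 0; i.e., the subspace {x : x_{N+1} = 0, ∑Γ_k x_k = 0} of dimension N-1 is an invariant decoherence-free subspace decoupled from input and output. -/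
open Matrix Complex

/-- The output row vector C: last entry `√κ`, others `0`. -/
noncomputable def TCrowC (N : ℕ) (κ : ℝ) : Fin N ⊕ Unit → ℂ :=
  Sum.elim (fun _ => 0) (fun _ => (Real.sqrt κ : ℂ))

lemma TCmatA_mulVec_of_cavity_eq_zero (N : ℕ) (κ ωs ωr : ℝ) (Γ : Fin N → ℝ)
    (x : Fin N ⊕ Unit → ℂ) (hcav : ∀ u : Unit, x (Sum.inr u) = 0) :
    (TCmatA N κ ωs ωr Γ).mulVec x =
      Sum.elim (fun a => -Complex.I * (ωs : ℂ) * x (Sum.inl a))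
        (fun _ => -Complex.I * ∑ k : Fin N, (Γ k : ℂ) * x (Sum.inl k)) := by
  funext i
  rcases i with a | u
  · simp [Matrix.mulVec, dotProduct, TCmatA, Fintype.sum_sum_type, hcav, ite_mul]
  · simp [Matrix.mulVec, dotProduct, TCmatA, Fintype.sum_sum_type, hcav, Finset.mul_sum,
      mul_assoc]

theorem stmt_9_general (N : ℕ) (κ : ℝ) (ωs ωr : ℝ)
    (Γ : Fin N → ℝ) (x : Fin N ⊕ Unit → ℂ)
    (hcav : ∀ u : Unit, x (Sum.inr u) = 0)
    (hdark : ∑ k : Fin N, (Γ k : ℂ) * x (Sum.inl k) = 0) :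
    (TCmatA N κ ωs ωr Γ).mulVec x = (-Complex.I * (ωs : ℂ)) • x ∧
    (∑ i, TCrowC N κ i * x i) = 0 ∧
    (∑ i, star (x i) * TCvecB N κ i) = 0 := by
  refine ⟨?_, ?_, ?_⟩
  · rw [TCmatA_mulVec_of_cavity_eq_zero N κ ωs ωr Γ x hcav, hdark]
    funext i
    rcases i with a | u <;> simp [hcav]
  · simp [TCrowC, Fintype.sum_sum_type, hcav]
  · simp [TCvecB, Fintype.sum_sum_type, hcav]

/-- Decoherence-free subspace of the resonant Tavis-Cummings model: any vector `x` with
vanishing cavity component and `∑ Γ_k x_k = 0` is an eigenvector of `A` with eigenvalue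
`-iω_s`, satisfies `Cx = 0`, and `x†B = 0`. -/
theorem stmt_9 (N : ℕ) (hN : 2 ≤ N) (κ : ℝ) (hκ : 0 < κ) (ωs ωr : ℝ)
    (Γ : Fin N → ℝ) (x : Fin N ⊕ Unit → ℂ)
    (hcav : ∀ u : Unit, x (Sum.inr u) = 0)
    (hdark : ∑ k : Fin N, (Γ k : ℂ) * x (Sum.inl k) = 0) :
    (TCmatA N κ ωs ωr Γ).mulVec x = (-Complex.I * (ωs : ℂ)) • x ∧
    (∑ i, TCrowC N κ i * x i) = 0 ∧
    (∑ i, star (x i) * TCvecB N κ i) = 0 :=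
  stmt_9_general N κ ωs ωr Γ x hcav hdark
end
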